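/- arXiv:1312.1400 — 4 statements merged into one kernel-verified Lean document; each statement's English description precedes it below -/
import Mathlib

section
/- Consider (QP1QC) with data A, B, f, g, μ. Assume the primal Slater condition holds and B ≠ 0. Then a vector x* ∈ ℝⁿ is a global minimizer of F over the feasible set {x : G(x) ≤ μ} if and only if there exists σ* ∈ ℝ such that: σ* ≥ 0; G(x*) ≤ μ; (A + σ*B)x* = f + σ*g; σ*·(G(x*) − μ) = 0; and A + σ*B is positive semidefinite. -/
/-!
Homogenize `F - F(x*)` and `G - μ` to quadratic forms `Q₁ (x, t)`, `Q₂ (x, t)` on `ℝⁿ × ℝ`.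
If `x*` is a global minimizer, no `(x, t)` makes both forms negative: for `t ≠ 0` rescale to
`t = 1`, and the case `t = 0` reduces to that one because the set where both forms are negative
is open. By Dines' theorem the joint range of `(Q₁, Q₂)` is a convex cone, so it can be separated
from the open negative quadrant, and the Slater point makes the weight of `Q₁` positive: this is
the S-lemma, giving `σ* ≥ 0` with `Q₁ + σ* Q₂ ≥ 0`. At `t = 1` this says that `x*` minimizes
`F + σ* G` over all of `ℝⁿ` (feasibility of `x*` forces complementarity), i.e.
`(A + σ* B) x* = f + σ* g` and `A + σ* B ≽ 0`. The converse is weak duality.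
-/

open Matrix Set Filter Topology Real

theorem Prod.exists_eq_smul_of_cross_eq_zero {u p : ℝ × ℝ} (hp : p ≠ 0)
    (h : u.1 * p.2 = u.2 * p.1) : ∃ t : ℝ, u = t • p := by
  by_cases hp₁ : p.1 = 0
  · have hp₂ : p.2 ≠ 0 := fun hp₂ => hp (Prod.ext hp₁ hp₂)
    refine ⟨u.2 / p.2, Prod.ext ?_ ?_⟩
    · simp only [Prod.smul_fst, smul_eq_mul, hp₁, mul_zero] at h ⊢
      simpa [hp₂] using h
    · simp [hp₂]
  · refine ⟨u.1 / p.1, Prod.ext ?_ ?_⟩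
    · simp [hp₁]
    · simp only [Prod.smul_snd, smul_eq_mul]
      field_simp
      linarith

theorem ContinuousLinearMap.apply_prod_eq (φ : ℝ × ℝ →L[ℝ] ℝ) (p : ℝ × ℝ) :
    φ p = φ (1, 0) * p.1 + φ (0, 1) * p.2 := by
  have hp : p = p.1 • ((1 : ℝ), (0 : ℝ)) + p.2 • ((0 : ℝ), (1 : ℝ)) := by simp
  conv_lhs => rw [hp]
  rw [map_add, map_smul, map_smul, smul_eq_mul, smul_eq_mul, mul_comm, mul_comm p.2]

theorem exists_nonneg_forall_nonneg_of_disjoint_Iio_prod {C : Set (ℝ × ℝ)} (hC : Convex ℝ C)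
    (hcone : ∀ p ∈ C, ∀ c : ℝ, 0 ≤ c → c • p ∈ C) (h₀ : (0 : ℝ × ℝ) ∈ C)
    (hdisj : Disjoint (Iio 0 ×ˢ Iio 0) C) :
    ∃ a b : ℝ, 0 ≤ a ∧ 0 ≤ b ∧ 0 < a + b ∧ ∀ p ∈ C, 0 ≤ a * p.1 + b * p.2 := by
  obtain ⟨φ, u, hφK, hφC⟩ := geometric_hahn_banach_open ((convex_Iio 0).prod (convex_Iio 0))
    (isOpen_Iio.prod isOpen_Iio) hC hdisj
  have hu : u ≤ 0 := by simpa using hφC 0 h₀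
  have hφK' : ∀ p ∈ Iic (0 : ℝ) ×ˢ Iic (0 : ℝ), φ p ≤ u := by
    rw [← closure_Iio, ← closure_prod_eq]
    exact fun p hp => closure_lt_subset_le φ.continuous continuous_const (closure_mono hφK hp)
  refine ⟨φ (1, 0), φ (0, 1), ?_, ?_, ?_, fun p hp => ?_⟩
  · have := hφK' (-1, 0) (by simp)
    rw [φ.apply_prod_eq] at this
    linarith
  · have := hφK' (0, -1) (by simp)
    rw [φ.apply_prod_eq] at this
    linarith
  · have := hφK (-1, -1) (by simp)
    rw [φ.apply_prod_eq] at this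
    linarith
  · rw [← φ.apply_prod_eq]
    by_contra! hneg
    have := hφC _ (hcone p hp ((u - 1) / φ p) (div_nonneg_of_nonpos (by linarith) hneg.le))
    rw [map_smul, smul_eq_mul, div_mul_cancel₀ _ hneg.ne] at this
    linarith

namespace QuadraticMap

variable {V : Type*} [AddCommGroup V] [Module ℝ V]

theorem map_smul_add_smul (Q : QuadraticForm ℝ V) (x y : V) (c s : ℝ) :
    Q (c • x + s • y) = c ^ 2 * Q x + c * s * polar Q x y + s ^ 2 * Q y := by
  rw [QuadraticMap.map_add Q, QuadraticMap.map_smul, QuadraticMap.map_smul, polar_smul_left,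
    polar_smul_right]
  simp only [smul_eq_mul]
  ring

theorem map_rotate_add_map_rotate (Q : QuadraticForm ℝ V) (x y : V) {c s : ℝ}
    (hcs : c ^ 2 + s ^ 2 = 1) : Q (c • x + s • y) + Q ((-s) • x + c • y) = Q x + Q y := by
  rw [map_smul_add_smul, map_smul_add_smul]
  linear_combination (Q x + Q y) * hcs

variable (Q₁ Q₂ : QuadraticForm ℝ V)

theorem smul_mem_range_prodMk {p : ℝ × ℝ} (hp : p ∈ range fun x => (Q₁ x, Q₂ x)) {c : ℝ}
    (hc : 0 ≤ c) : c • p ∈ range fun x => (Q₁ x, Q₂ x) := by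
  obtain ⟨x, rfl⟩ := hp
  refine ⟨√c • x, ?_⟩
  simp [QuadraticMap.map_smul, Real.mul_self_sqrt hc]

theorem exists_rotate_cross_eq_zero (x y : V) :
    ∃ θ : ℝ, Q₁ (cos θ • x + sin θ • y) * (Q₂ x + Q₂ y) =
      Q₂ (cos θ • x + sin θ • y) * (Q₁ x + Q₁ y) := by
  set d : ℝ → ℝ := fun θ => Q₁ (cos θ • x + sin θ • y) * (Q₂ x + Q₂ y) -
    Q₂ (cos θ • x + sin θ • y) * (Q₁ x + Q₁ y) with hd
  have hcont : Continuous d := by simp only [hd, map_smul_add_smul]; fun_prop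
  have hd_pi_div_two : d (π / 2) = -d 0 := by simp [hd]; ring
  obtain ⟨θ, -, hθ⟩ := intermediate_value_uIcc (a := 0) (b := π / 2) hcont.continuousOn
    (by rw [hd_pi_div_two, mem_uIcc]
        exact (le_total 0 (d 0)).symm.imp (fun h => ⟨h, by linarith⟩) (fun h => ⟨by linarith, h⟩))
  exact ⟨θ, sub_eq_zero.1 hθ⟩

/-- Rotating `(x, y)` by a suitable angle splits `p + q` into two points of the range that are
both parallel to `p + q` and sum to it, so one of them is a positive multiple of `p + q`. -/
theorem add_mem_range_prodMk {p q : ℝ × ℝ} (hp : p ∈ range fun x => (Q₁ x, Q₂ x))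
    (hq : q ∈ range fun x => (Q₁ x, Q₂ x)) : p + q ∈ range fun x => (Q₁ x, Q₂ x) := by
  obtain ⟨x, rfl⟩ := hp
  obtain ⟨y, rfl⟩ := hq
  set p := (Q₁ x, Q₂ x) + (Q₁ y, Q₂ y)
  by_cases hp : p = 0
  · exact ⟨0, by simp [hp]⟩
  obtain ⟨θ, hθ⟩ := exists_rotate_cross_eq_zero Q₁ Q₂ x y
  set w := cos θ • x + sin θ • y
  set w' := (-sin θ) • x + cos θ • y
  have hsum : (Q₁ w, Q₂ w) + (Q₁ w', Q₂ w') = p := by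
    have hcs : cos θ ^ 2 + sin θ ^ 2 = 1 := cos_sq_add_sin_sq θ
    simp only [Prod.mk_add_mk, p, w, w', map_rotate_add_map_rotate _ _ _ hcs]
  obtain ⟨t, ht⟩ := Prod.exists_eq_smul_of_cross_eq_zero (u := (Q₁ w, Q₂ w)) hp hθ
  rcases lt_or_ge 0 t with ht₀ | ht₀
  · convert smul_mem_range_prodMk Q₁ Q₂ ⟨w, ht⟩ (inv_nonneg.2 ht₀.le) using 1
    rw [smul_smul, inv_mul_cancel₀ ht₀.ne', one_smul]
  · have ht' : (Q₁ w', Q₂ w') = (1 - t) • p := by rw [sub_smul, one_smul, ← ht, ← hsum]; abel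
    have h₁ : (0 : ℝ) < 1 - t := by linarith
    convert smul_mem_range_prodMk Q₁ Q₂ ⟨w', ht'⟩ (inv_nonneg.2 h₁.le) using 1
    rw [smul_smul, inv_mul_cancel₀ h₁.ne', one_smul]

/-- Dines' theorem. -/
theorem convex_range_prodMk : Convex ℝ (range fun x => (Q₁ x, Q₂ x)) :=
  fun _ hp _ hq _ _ ha hb _ =>
    add_mem_range_prodMk Q₁ Q₂ (smul_mem_range_prodMk Q₁ Q₂ hp ha)
      (smul_mem_range_prodMk Q₁ Q₂ hq hb)

/-- The S-lemma (Yakubovich) for quadratic forms. -/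
theorem exists_nonneg_forall_nonneg_add_mul {Q₁ Q₂ : QuadraticForm ℝ V}
    (hslater : ∃ x, Q₂ x < 0) (h : ∀ x, ¬(Q₁ x < 0 ∧ Q₂ x < 0)) :
    ∃ σ : ℝ, 0 ≤ σ ∧ ∀ x, 0 ≤ Q₁ x + σ * Q₂ x := by
  obtain ⟨a, b, ha, hb, hab, hsep⟩ := exists_nonneg_forall_nonneg_of_disjoint_Iio_prod
    (convex_range_prodMk Q₁ Q₂) (fun _ hp _ hc => smul_mem_range_prodMk Q₁ Q₂ hp hc)
    ⟨0, by simp⟩ (disjoint_left.2 fun _ hpK ⟨x, hx⟩ => h x (by simpa [← hx] using hpK))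
  obtain ⟨x₀, hx₀⟩ := hslater
  obtain rfl | ha' := ha.eq_or_lt
  · nlinarith [hsep _ ⟨x₀, rfl⟩]
  refine ⟨b / a, div_nonneg hb ha'.le, fun x => ?_⟩
  have hx : Q₁ x + b / a * Q₂ x = (a * Q₁ x + b * Q₂ x) / a := by field_simp
  exact hx ▸ div_nonneg (hsep _ ⟨x, rfl⟩) ha'.le

end QuadraticMap

theorem eq_zero_and_nonneg_of_forall_mul_sq_add_mul_nonneg {a b : ℝ}
    (h : ∀ s : ℝ, 0 ≤ a * s ^ 2 + b * s) : b = 0 ∧ 0 ≤ a := by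
  have hb : b = 0 := by
    -- the value at `s = -b / (|a| + 1)` is `b² (a - |a| - 1) / (|a| + 1)²`
    have hs := h (-b / (|a| + 1))
    have ha : a < |a| + 1 := by linarith [le_abs_self a]
    have hpos : 0 < |a| + 1 := by positivity
    rw [div_pow, neg_sq] at hs
    field_simp at hs
    have hb2 : b ^ 2 ≤ 0 := by nlinarith
    exact pow_eq_zero_iff two_ne_zero |>.1 (le_antisymm hb2 (sq_nonneg b))
  exact ⟨hb, by simpa [hb] using h 1⟩

section

variable {ι : Type*} [Fintype ι]

/-- `quadFun A f` and `quadFun B g` are the objective `F` and the constraint function `G`. -/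
def quadFun (M : Matrix ι ι ℝ) (h x : ι → ℝ) : ℝ := x ⬝ᵥ M *ᵥ x - 2 * (h ⬝ᵥ x)

theorem quadFun_add_smul (A B : Matrix ι ι ℝ) (f g : ι → ℝ) (σ : ℝ) (x : ι → ℝ) :
    quadFun (A + σ • B) (f + σ • g) x = quadFun A f x + σ * quadFun B g x := by
  simp only [quadFun, add_mulVec, smul_mulVec, dotProduct_add, dotProduct_smul,
    add_dotProduct, smul_dotProduct, smul_eq_mul]
  ring

theorem Matrix.IsSymm.dotProduct_mulVec_comm {M : Matrix ι ι ℝ} (hM : M.IsSymm) (v w : ι → ℝ) :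
    v ⬝ᵥ M *ᵥ w = w ⬝ᵥ M *ᵥ v := by
  rw [dotProduct_mulVec, ← mulVec_transpose, hM.eq, dotProduct_comm]

theorem quadFun_add {M : Matrix ι ι ℝ} (hM : M.IsSymm) (h x d : ι → ℝ) :
    quadFun M h (x + d) = quadFun M h x + 2 * (d ⬝ᵥ (M *ᵥ x - h)) + d ⬝ᵥ M *ᵥ d := by
  simp only [quadFun, mulVec_add, dotProduct_add, add_dotProduct, dotProduct_sub,
    hM.dotProduct_mulVec_comm x d, dotProduct_comm h d]
  ring

theorem forall_quadFun_le_iff {M : Matrix ι ι ℝ} (hM : M.IsSymm) (h x₀ : ι → ℝ) :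
    (∀ x, quadFun M h x₀ ≤ quadFun M h x) ↔ M *ᵥ x₀ = h ∧ M.PosSemidef := by
  constructor
  · intro hmin
    have hcoeff (d : ι → ℝ) : d ⬝ᵥ (M *ᵥ x₀ - h) = 0 ∧ 0 ≤ d ⬝ᵥ M *ᵥ d := by
      have key := eq_zero_and_nonneg_of_forall_mul_sq_add_mul_nonneg
        (a := d ⬝ᵥ M *ᵥ d) (b := 2 * (d ⬝ᵥ (M *ᵥ x₀ - h))) fun s => by
          have := hmin (x₀ + s • d)
          rw [quadFun_add hM] at this
          simp only [mulVec_smul, dotProduct_smul, smul_dotProduct, smul_eq_mul] at this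
          linarith
      exact ⟨by linarith [key.1], key.2⟩
    refine ⟨sub_eq_zero.1 (dotProduct_self_eq_zero.1 (hcoeff _).1), ?_⟩
    exact .of_dotProduct_mulVec_nonneg (isHermitian_iff_isSymm.2 hM)
      fun x => by simpa using (hcoeff x).2
  · rintro ⟨hstat, hpsd⟩ x
    have := quadFun_add hM h x₀ (x - x₀)
    rw [add_sub_cancel, hstat, sub_self, dotProduct_zero] at this
    have hnn := hpsd.dotProduct_mulVec_nonneg (x - x₀)
    rw [star_trivial] at hnn
    linarith

def homogenize (M : Matrix ι ι ℝ) (h : ι → ℝ) (c : ℝ) : QuadraticForm ℝ ((ι → ℝ) × ℝ) :=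
  LinearMap.BilinMap.toQuadraticMap <| LinearMap.mk₂ ℝ
    (fun v w => v.1 ⬝ᵥ M *ᵥ w.1 - 2 * (h ⬝ᵥ v.1) * w.2 - c * v.2 * w.2)
    (fun _ _ _ => by simp only [Prod.fst_add, Prod.snd_add, add_dotProduct, dotProduct_add]; ring)
    (fun _ _ _ => by
      simp only [Prod.smul_fst, Prod.smul_snd, smul_dotProduct, dotProduct_smul, smul_eq_mul]
      ring)
    (fun _ _ _ => by simp only [Prod.fst_add, Prod.snd_add, mulVec_add, dotProduct_add]; ring)
    (fun _ _ _ => by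
      simp only [Prod.smul_fst, Prod.smul_snd, mulVec_smul, dotProduct_smul, smul_eq_mul]
      ring)

@[simp]
theorem homogenize_apply (M : Matrix ι ι ℝ) (h : ι → ℝ) (c : ℝ) (x : ι → ℝ) (t : ℝ) :
    homogenize M h c (x, t) = x ⬝ᵥ M *ᵥ x - 2 * (h ⬝ᵥ x) * t - c * t ^ 2 := by
  simp only [homogenize, LinearMap.BilinMap.toQuadraticMap_apply, LinearMap.mk₂_apply]
  ring

theorem homogenize_apply_of_ne_zero (M : Matrix ι ι ℝ) (h : ι → ℝ) (c : ℝ) (x : ι → ℝ)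
    {t : ℝ} (ht : t ≠ 0) : homogenize M h c (x, t) = t ^ 2 * (quadFun M h (t⁻¹ • x) - c) := by
  have hx : (x, t) = t • (t⁻¹ • x, (1 : ℝ)) := by simp [smul_smul, ht]
  rw [hx, QuadraticMap.map_smul, homogenize_apply, smul_eq_mul]
  simp only [quadFun]
  ring

theorem homogenize_not_neg_and_neg {A B : Matrix ι ι ℝ} {f g x₀ : ι → ℝ} {μ : ℝ}
    (hmin : ∀ x, quadFun B g x ≤ μ → quadFun A f x₀ ≤ quadFun A f x) (v : (ι → ℝ) × ℝ) :
    ¬(homogenize A f (quadFun A f x₀) v < 0 ∧ homogenize B g μ v < 0) := by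
  have hoff (x : ι → ℝ) {t : ℝ} (ht : t ≠ 0) :
      ¬(homogenize A f (quadFun A f x₀) (x, t) < 0 ∧ homogenize B g μ (x, t) < 0) := by
    rintro ⟨h₁, h₂⟩
    rw [homogenize_apply_of_ne_zero _ _ _ _ ht] at h₁ h₂
    have ht₂ : 0 < t ^ 2 := by positivity
    have := hmin (t⁻¹ • x) (by nlinarith)
    nlinarith
  obtain ⟨x, t⟩ := v
  intro hneg
  rcases eq_or_ne t 0 with rfl | ht
  · -- both forms stay negative near `(x, 0)`, in particular at some `(x, s)` with `s ≠ 0`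
    have hcont (M : Matrix ι ι ℝ) (h : ι → ℝ) (c : ℝ) :
        Continuous fun s : ℝ => homogenize M h c (x, s) := by
      simp only [homogenize_apply]
      fun_prop
    have hev : ∀ᶠ s in 𝓝[≠] 0,
        homogenize A f (quadFun A f x₀) (x, s) < 0 ∧ homogenize B g μ (x, s) < 0 :=
      nhdsWithin_le_nhds <|
        ((hcont _ _ _).continuousAt.eventually_lt continuousAt_const hneg.1).and
          ((hcont _ _ _).continuousAt.eventually_lt continuousAt_const hneg.2)
    obtain ⟨s, hs, hs₀⟩ := (hev.and self_mem_nhdsWithin).exists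
    exact hoff x hs₀ hs
  · exact hoff x ht hneg

end

theorem stmt_15_general {n : ℕ} (A B : Matrix (Fin n) (Fin n) ℝ)
    (hA : A.IsSymm) (hB : B.IsSymm) (f g : Fin n → ℝ) (μ : ℝ)
    (slater : ∃ x₀ : Fin n → ℝ, x₀ ⬝ᵥ B *ᵥ x₀ - 2 * (g ⬝ᵥ x₀) < μ)
    (xs : Fin n → ℝ) :
    (xs ⬝ᵥ B *ᵥ xs - 2 * (g ⬝ᵥ xs) ≤ μ ∧
      ∀ x : Fin n → ℝ, x ⬝ᵥ B *ᵥ x - 2 * (g ⬝ᵥ x) ≤ μ →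
        xs ⬝ᵥ A *ᵥ xs - 2 * (f ⬝ᵥ xs) ≤ x ⬝ᵥ A *ᵥ x - 2 * (f ⬝ᵥ x)) ↔
      ∃ σs : ℝ, 0 ≤ σs ∧
        xs ⬝ᵥ B *ᵥ xs - 2 * (g ⬝ᵥ xs) ≤ μ ∧
        (A + σs • B) *ᵥ xs = f + σs • g ∧
        σs * (xs ⬝ᵥ B *ᵥ xs - 2 * (g ⬝ᵥ xs) - μ) = 0 ∧
        (A + σs • B).PosSemidef := by
  show (quadFun B g xs ≤ μ ∧ ∀ x, quadFun B g x ≤ μ → quadFun A f xs ≤ quadFun A f x) ↔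
    ∃ σ : ℝ, 0 ≤ σ ∧ quadFun B g xs ≤ μ ∧ (A + σ • B) *ᵥ xs = f + σ • g ∧
      σ * (quadFun B g xs - μ) = 0 ∧ (A + σ • B).PosSemidef
  have hmin_iff (σ : ℝ) := forall_quadFun_le_iff (hA.add (hB.smul σ)) (f + σ • g) xs
  simp only [quadFun_add_smul] at hmin_iff
  constructor
  · rintro ⟨hfeas, hmin⟩
    obtain ⟨x₀, hx₀⟩ := slater
    obtain ⟨σ, hσ, hS⟩ := QuadraticMap.exists_nonneg_forall_nonneg_add_mul
      (⟨(x₀, 1), by simpa [quadFun] using hx₀⟩ : ∃ v, homogenize B g μ v < 0)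
      (homogenize_not_neg_and_neg hmin)
    have hlag (x : Fin n → ℝ) : 0 ≤ quadFun A f x - quadFun A f xs + σ * (quadFun B g x - μ) := by
      simpa [quadFun] using hS (x, 1)
    have hcomp : σ * (quadFun B g xs - μ) = 0 := by
      linarith [hlag xs, mul_nonneg hσ (sub_nonneg.2 hfeas)]
    obtain ⟨hstat, hpsd⟩ := (hmin_iff σ).1 fun x => by linarith [hlag x]
    exact ⟨σ, hσ, hfeas, hstat, hcomp, hpsd⟩
  · rintro ⟨σ, hσ, hfeas, hstat, hcomp, hpsd⟩
    refine ⟨hfeas, fun x hx => ?_⟩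
    linarith [(hmin_iff σ).2 ⟨hstat, hpsd⟩ x, mul_nonneg hσ (sub_nonneg.2 hx)]

/-- under the primal Slater condition with `B ≠ 0`, `x*` is a global
minimizer of (QP1QC) iff there is `σ* ≥ 0` with `x*` feasible, `(A + σ*B)x* = f + σ*g`,
complementarity `σ*(G(x*) − μ) = 0` and `A + σ*B ≽ 0`. -/
theorem stmt_15 {n : ℕ} (A B : Matrix (Fin n) (Fin n) ℝ)
    (hA : A.IsSymm) (hB : B.IsSymm) (f g : Fin n → ℝ) (μ : ℝ)
    (slater : ∃ x₀ : Fin n → ℝ, x₀ ⬝ᵥ B *ᵥ x₀ - 2 * (g ⬝ᵥ x₀) < μ)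
    (hBne : B ≠ 0) (xs : Fin n → ℝ) :
    (xs ⬝ᵥ B *ᵥ xs - 2 * (g ⬝ᵥ xs) ≤ μ ∧
      ∀ x : Fin n → ℝ, x ⬝ᵥ B *ᵥ x - 2 * (g ⬝ᵥ x) ≤ μ →
        xs ⬝ᵥ A *ᵥ xs - 2 * (f ⬝ᵥ xs) ≤ x ⬝ᵥ A *ᵥ x - 2 * (f ⬝ᵥ x)) ↔
      ∃ σs : ℝ, 0 ≤ σs ∧
        xs ⬝ᵥ B *ᵥ xs - 2 * (g ⬝ᵥ xs) ≤ μ ∧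
        (A + σs • B) *ᵥ xs = f + σs • g ∧
        σs * (xs ⬝ᵥ B *ᵥ xs - 2 * (g ⬝ᵥ xs) - μ) = 0 ∧
        (A + σs • B).PosSemidef :=
  stmt_15_general A B hA hB f g μ slater xs
end

section
/- Let M be a real symmetric (n+1)×(n+1) matrix. Then the inequality [xᵀ, 1] M [x; 1] ≥ 0 holds for every x ∈ ℝⁿ (where [x; 1] denotes the vector in ℝ^{n+1} obtained by appending the entry 1 to x) if and only if M is positive semidefinite. -/
/-!
A vector `v` with last coordinate `t ≠ 0` is `t • [x; 1]` for `x = t⁻¹ • init v`, so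
`vᵀ M v = t² · [x; 1]ᵀ M [x; 1] ≥ 0`. Such vectors are dense and the quadratic form is
continuous, so it is nonnegative everywhere.
-/

open Matrix Topology

theorem Fin.smul_snoc {M α : Type*} [SMul M α] {n : ℕ} (c : M) (x : Fin n → α) (a : α) :
    c • (Fin.snoc x a : Fin (n + 1) → α) = Fin.snoc (c • x) (c • a) := by
  ext i
  induction i using Fin.lastCases <;> simp

theorem Fin.eq_smul_snoc_one {K : Type*} [Field K] {n : ℕ} (v : Fin (n + 1) → K)
    (hv : v (Fin.last n) ≠ 0) :
    v = v (Fin.last n) • Fin.snoc ((v (Fin.last n))⁻¹ • Fin.init v) 1 := by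
  rw [Fin.smul_snoc, smul_inv_smul₀ hv, smul_eq_mul, mul_one, Fin.snoc_init_self]

theorem Matrix.smul_dotProduct_mulVec_smul {m R : Type*} [Fintype m] [CommSemiring R]
    (M : Matrix m m R) (c : R) (v : m → R) :
    (c • v) ⬝ᵥ M *ᵥ (c • v) = c ^ 2 * (v ⬝ᵥ M *ᵥ v) := by
  rw [mulVec_smul, dotProduct_smul, smul_dotProduct, smul_eq_mul, smul_eq_mul, sq, mul_assoc]

theorem dense_setOf_apply_ne_zero {ι R : Type*} [TopologicalSpace R] [Zero R]
    [(𝓝[≠] (0 : R)).NeBot] (i : ι) : Dense {v : ι → R | v i ≠ 0} :=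
  (dense_compl_singleton 0).preimage (isOpenMap_eval i)

theorem Matrix.posSemidef_of_forall_snoc_one {n : ℕ} {M : Matrix (Fin (n + 1)) (Fin (n + 1)) ℝ}
    (hM : M.IsSymm)
    (h : ∀ x : Fin n → ℝ, 0 ≤ (Fin.snoc x 1 : Fin (n + 1) → ℝ) ⬝ᵥ M *ᵥ Fin.snoc x 1) :
    M.PosSemidef := by
  refine posSemidef_iff_dotProduct_mulVec.mpr ⟨isHermitian_iff_isSymm.mpr hM, fun v => ?_⟩
  rw [star_trivial]
  refine (dense_setOf_apply_ne_zero (Fin.last n)).induction (P := fun v => 0 ≤ v ⬝ᵥ M *ᵥ v)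
    (fun v hv => ?_) (isClosed_le continuous_const (by fun_prop)) v
  rw [Fin.eq_smul_snoc_one v hv, smul_dotProduct_mulVec_smul]
  exact mul_nonneg (sq_nonneg _) (h _)

/-- for a symmetric `(n+1)×(n+1)` matrix `M`,
`[xᵀ, 1] M [x; 1] ≥ 0` for all `x ∈ ℝⁿ` iff `M ≽ 0`. -/
theorem stmt_16 {n : ℕ} (M : Matrix (Fin (n + 1)) (Fin (n + 1)) ℝ)
    (hM : M.IsSymm) :
    (∀ x : Fin n → ℝ,
      0 ≤ (Fin.snoc x 1 : Fin (n + 1) → ℝ) ⬝ᵥ M *ᵥ (Fin.snoc x 1 : Fin (n + 1) → ℝ)) ↔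
      M.PosSemidef :=
  ⟨posSemidef_of_forall_snoc_one hM, fun hPSD x => by
    simpa using hPSD.dotProduct_mulVec_nonneg (Fin.snoc x 1 : Fin (n + 1) → ℝ)⟩
end

section
/- Consider (QP1QC) with data A, B, f, g, μ and assume the primal Slater condition holds. Then for every s ∈ ℝ, the following are equivalent: (i) F(x) ≥ s for every x with G(x) ≤ μ; (ii) there exists σ ≥ 0 such that the (n+1)×(n+1) symmetric block matrix [[A + σB, −f − σg], [−fᵀ − σgᵀ, −μσ − s]] is positive semidefinite. In particular, the optimal value of (QP1QC) equals the optimal value of its SDP dual sup{s : ∃σ ≥ 0 with the above block matrix positive semidefinite}. -/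
/-!
Homogenize: `F - s` and `G - μ` become quadratic forms `P`, `Q` on `ℝⁿ × ℝ` whose matrices are
the bordered matrices, and the block matrix of (ii) is the matrix of `P + σ Q`. Condition (i)
says `Q < 0 → P ≥ 0` on the slice `t = 1`, which spreads to the whole space by scaling and, on
`t = 0`, by continuity. By Dines' theorem the joint range of `(P, Q)` is convex; it misses the
open negative quadrant, so a line separates them, giving `a P + b Q ≥ 0` with `a, b ≥ 0`, and
the Slater point forces `a > 0`. The dual feasible set is then exactly the set of lower bounds
of the primal values, whence the equality of optimal values.
-/

open Matrix Filter Topology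

namespace QuadraticMap

variable {V : Type*} [AddCommGroup V] [Module ℝ V]

lemma map_smul_add_smul_s17 (R : QuadraticMap ℝ V ℝ) (a b : ℝ) (u w : V) :
    R (a • u + b • w) = a ^ 2 * R u + b ^ 2 * R w + a * b * polar R u w := by
  rw [QuadraticMap.map_add R, R.map_smul, R.map_smul, polar_smul_left, polar_smul_right]
  simp only [smul_eq_mul]
  ring

lemma map_rotate_add_map_rotate_s17 (R : QuadraticMap ℝ V ℝ) (a b : ℝ) (u w : V) :
    R (a • u + b • w) + R ((-b) • u + a • w) = (a ^ 2 + b ^ 2) * (R u + R w) := by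
  rw [map_smul_add_smul_s17, map_smul_add_smul_s17]
  ring

/-- The difference `R (a • u + b • w) - R ((-b) • u + a • w)` is an indefinite binary quadratic
form in `(a, b)`, so it has a nontrivial zero. -/
lemma exists_map_rotate_eq (R : QuadraticMap ℝ V ℝ) (u w : V) :
    ∃ a b : ℝ, 0 < a ^ 2 + b ^ 2 ∧ R (a • u + b • w) = R ((-b) • u + a • w) := by
  simp only [map_smul_add_smul_s17]
  by_cases he : R u - R w = 0
  · exact ⟨1, 0, by norm_num, by linear_combination he⟩
  · obtain ⟨t, ht⟩ := exists_quadratic_eq_zero he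
      ⟨√(discrim (R u - R w) (2 * polar R u w) (-(R u - R w))),
        (Real.mul_self_sqrt (by
          rw [discrim]; nlinarith [sq_nonneg (polar R u w), sq_nonneg (R u - R w)])).symm⟩
    exact ⟨t, 1, by positivity, by linear_combination ht⟩

lemma exists_eq_of_collinear (P Q : QuadraticMap ℝ V ℝ) {p q : ℝ} {w : V}
    (hcol : p * Q w = q * P w) (hpos : 0 < p * P w + q * Q w) :
    ∃ v, P v = p ∧ Q v = q := by
  have hpq : 0 < p ^ 2 + q ^ 2 := by
    by_contra! h
    have hp : p = 0 := by nlinarith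
    have hq : q = 0 := by nlinarith
    simp [hp, hq] at hpos
  have hl : 0 < (p * P w + q * Q w) / (p ^ 2 + q ^ 2) := by positivity
  refine ⟨(√((p * P w + q * Q w) / (p ^ 2 + q ^ 2)))⁻¹ • w, ?_, ?_⟩ <;>
    rw [QuadraticMap.map_smul, smul_eq_mul, ← mul_inv, Real.mul_self_sqrt hl.le] <;> field_simp
  · linear_combination (-q) * hcol
  · linear_combination p * hcol

lemma exists_map_eq_add (P Q : QuadraticMap ℝ V ℝ) (v₁ v₂ : V) :
    ∃ v, P v = P v₁ + P v₂ ∧ Q v = Q v₁ + Q v₂ := by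
  -- Rotate `(v₁, v₂)` so that `(P, Q)` is collinear with `(p, q)` at both rotated vectors; their
  -- two values add up to `(a ^ 2 + b ^ 2) • (p, q)`, so one of them is a positive multiple of it.
  set p := P v₁ + P v₂ with hp
  set q := Q v₁ + Q v₂ with hq
  obtain ⟨a, b, hab, hR⟩ := exists_map_rotate_eq (p • Q - q • P) v₁ v₂
  have hR_sum := map_rotate_add_map_rotate_s17 (p • Q - q • P) a b v₁ v₂
  have hS_sum := map_rotate_add_map_rotate_s17 (p • P + q • Q) a b v₁ v₂
  simp only [_root_.sub_apply, _root_.add_apply, _root_.smul_apply, smul_eq_mul] at hR hR_sum hS_sum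
  have hcol₁ : p * Q (a • v₁ + b • v₂) = q * P (a • v₁ + b • v₂) := by
    linear_combination (1 / 2) * hR + (1 / 2) * hR_sum + ((a ^ 2 + b ^ 2) / 2 * q) * hp
      - ((a ^ 2 + b ^ 2) / 2 * p) * hq
  have hcol₂ : p * Q ((-b) • v₁ + a • v₂) = q * P ((-b) • v₁ + a • v₂) := by
    linear_combination (-1 / 2) * hR + (1 / 2) * hR_sum + ((a ^ 2 + b ^ 2) / 2 * q) * hp
      - ((a ^ 2 + b ^ 2) / 2 * p) * hq
  by_cases hpq : p = 0 ∧ q = 0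
  · exact ⟨0, by simp [hpq.1], by simp [hpq.2]⟩
  have hpq_pos : 0 < p ^ 2 + q ^ 2 := by
    rcases not_and_or.mp hpq with h | h <;>
      nlinarith [sq_pos_of_ne_zero h, sq_nonneg p, sq_nonneg q]
  have hS : (p * P (a • v₁ + b • v₂) + q * Q (a • v₁ + b • v₂))
      + (p * P ((-b) • v₁ + a • v₂) + q * Q ((-b) • v₁ + a • v₂))
      = (a ^ 2 + b ^ 2) * (p ^ 2 + q ^ 2) := by
    linear_combination hS_sum - ((a ^ 2 + b ^ 2) * p) * hp - ((a ^ 2 + b ^ 2) * q) * hq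
  rcases lt_or_ge 0 (p * P (a • v₁ + b • v₂) + q * Q (a • v₁ + b • v₂)) with h | h
  · exact exists_eq_of_collinear P Q hcol₁ h
  · exact exists_eq_of_collinear P Q hcol₂ (by linarith [mul_pos hab hpq_pos])

/-- Dines' theorem. -/
theorem convex_range_prodMk_s17 (P Q : QuadraticMap ℝ V ℝ) :
    Convex ℝ (Set.range fun v => (P v, Q v)) := by
  rintro _ ⟨v₁, rfl⟩ _ ⟨v₂, rfl⟩ θ₁ θ₂ h₁ h₂ -
  obtain ⟨v, hPv, hQv⟩ := exists_map_eq_add P Q (√θ₁ • v₁) (√θ₂ • v₂)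
  refine ⟨v, ?_⟩
  simp [hPv, hQv, QuadraticMap.map_smul, Real.mul_self_sqrt h₁, Real.mul_self_sqrt h₂]

lemma exists_nonneg_combination_nonneg (P Q : QuadraticMap ℝ V ℝ) (h : ∀ v, Q v < 0 → 0 ≤ P v) :
    ∃ a b : ℝ, 0 ≤ a ∧ 0 ≤ b ∧ 0 < a + b ∧ ∀ v, 0 ≤ a * P v + b * Q v := by
  have hdisj : Disjoint (Set.Iio (0 : ℝ) ×ˢ Set.Iio (0 : ℝ)) (Set.range fun v => (P v, Q v)) := by
    rw [Set.disjoint_right]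
    rintro _ ⟨v, rfl⟩ ⟨hP, hQ⟩
    exact (h v hQ).not_gt hP
  obtain ⟨f, u, hfC, hfK⟩ := geometric_hahn_banach_open ((convex_Iio 0).prod (convex_Iio 0))
    (isOpen_Iio.prod isOpen_Iio) (convex_range_prodMk_s17 P Q) hdisj
  have hf : ∀ p q : ℝ, f (p, q) = p * f (1, 0) + q * f (0, 1) := fun p q => by
    rw [← smul_eq_mul, ← smul_eq_mul, ← map_smul, ← map_smul, ← map_add]
    simp
  have hf_closure : ∀ p ≤ 0, ∀ q ≤ 0, f (p, q) ≤ u := fun p hp q hq => by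
    refine closure_minimal (fun y hy => (hfC y hy).le)
      (isClosed_le f.continuous continuous_const) ?_
    rw [closure_prod_eq, closure_Iio]
    exact ⟨hp, hq⟩
  have hf0 : f (0, 0) = 0 := by simpa using hf 0 0
  have hu : u = 0 := le_antisymm (by simpa [hf0] using hfK (P 0, Q 0) ⟨0, rfl⟩)
    (hf0 ▸ hf_closure 0 le_rfl 0 le_rfl)
  refine ⟨f (1, 0), f (0, 1), ?_, ?_, ?_, fun v => ?_⟩
  · linarith [hf (-1) 0, hf_closure (-1) (by norm_num) 0 le_rfl]
  · linarith [hf 0 (-1), hf_closure 0 le_rfl (-1) (by norm_num)]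
  · linarith [hf (-1) (-1), hfC (-1, -1) ⟨by norm_num, by norm_num⟩]
  · linarith [hf (P v) (Q v), hfK _ ⟨v, rfl⟩]

/-- Yakubovich's S-lemma, homogeneous form. -/
theorem s_lemma (P Q : QuadraticMap ℝ V ℝ) (hQ : ∃ v₀, Q v₀ < 0) (h : ∀ v, Q v < 0 → 0 ≤ P v) :
    ∃ σ : ℝ, 0 ≤ σ ∧ ∀ v, 0 ≤ P v + σ * Q v := by
  obtain ⟨a, b, ha, hb, hab, hcomb⟩ := exists_nonneg_combination_nonneg P Q h
  obtain ⟨v₀, hv₀⟩ := hQ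
  obtain rfl | ha := ha.eq_or_lt
  · linarith [hcomb v₀, mul_neg_of_pos_of_neg (show 0 < b by linarith) hv₀]
  refine ⟨b / a, by positivity, fun v => ?_⟩
  have : P v + b / a * Q v = (a * P v + b * Q v) / a := by field_simp
  rw [this]
  exact div_nonneg (hcomb v) ha.le

lemma forall_neg_imp_nonneg_of_map_eq_one [TopologicalSpace V] [ContinuousAdd V]
    [ContinuousSMul ℝ V] (P Q : QuadraticMap ℝ V ℝ) (hP : Continuous P) (hQ : Continuous Q)
    (ℓ : V →ₗ[ℝ] ℝ) (hℓ : Function.Surjective ℓ) (h : ∀ v, ℓ v = 1 → Q v < 0 → 0 ≤ P v) :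
    ∀ v, Q v < 0 → 0 ≤ P v := by
  have h_ne : ∀ v, ℓ v ≠ 0 → Q v < 0 → 0 ≤ P v := fun v hv hQv => by
    have hv' : v = ℓ v • (ℓ v)⁻¹ • v := by rw [smul_inv_smul₀ hv]
    rw [hv', QuadraticMap.map_smul, smul_eq_mul] at hQv ⊢
    have h1 : ℓ ((ℓ v)⁻¹ • v) = 1 := by rw [map_smul, smul_eq_mul, inv_mul_cancel₀ hv]
    have hpos : 0 < ℓ v * ℓ v := mul_self_pos.2 hv
    exact mul_nonneg hpos.le (h _ h1 (neg_of_mul_neg_right hQv hpos.le))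
  intro v hQv
  by_cases hv : ℓ v = 0
  swap
  · exact h_ne v hv hQv
  by_contra! hPv
  obtain ⟨e, he⟩ := hℓ 1
  have hpath : Continuous fun t : ℝ => v + t • e := by fun_prop
  have hnear : ∀ᶠ t in 𝓝 (0 : ℝ), P (v + t • e) < 0 ∧ Q (v + t • e) < 0 :=
    ((hP.comp hpath).continuousAt.eventually_lt continuousAt_const (by simpa using hPv)).and
      ((hQ.comp hpath).continuousAt.eventually_lt continuousAt_const (by simpa using hQv))
  obtain ⟨t, ⟨hPt, hQt⟩, ht⟩ :=
    ((hnear.filter_mono nhdsWithin_le_nhds).and (self_mem_nhdsWithin (s := {0}ᶜ))).exists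
  exact (h_ne _ (by simpa [hv, he] using ht) hQt).not_gt hPt

end QuadraticMap

namespace Matrix

variable {m : Type*}

def bordered (A : Matrix m m ℝ) (b : m → ℝ) (c : ℝ) : Matrix (m ⊕ Fin 1) (m ⊕ Fin 1) ℝ :=
  fromBlocks A (replicateCol (Fin 1) b) (replicateRow (Fin 1) b) (of fun _ _ => c)

lemma isSymm_bordered {A : Matrix m m ℝ} (hA : A.IsSymm) (b : m → ℝ) (c : ℝ) :
    (bordered A b c).IsSymm := by
  rw [bordered, IsSymm, fromBlocks_transpose, transpose_replicateCol, transpose_replicateRow, hA]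
  rfl

lemma bordered_add_smul (A B : Matrix m m ℝ) (b b' : m → ℝ) (c c' σ : ℝ) :
    bordered (A + σ • B) (b + σ • b') (c + σ * c') = bordered A b c + σ • bordered B b' c' := by
  simp only [bordered, fromBlocks_smul, fromBlocks_add]
  congr 1

lemma sumElim_dotProduct_bordered_mulVec [Fintype m] (A : Matrix m m ℝ) (b x : m → ℝ) (c t : ℝ) :
    Sum.elim x (fun _ => t) ⬝ᵥ bordered A b c *ᵥ Sum.elim x (fun _ => t)
      = x ⬝ᵥ A *ᵥ x + 2 * t * (b ⬝ᵥ x) + t ^ 2 * c := by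
  have hcol : replicateCol (Fin 1) b *ᵥ (fun _ => t) = t • b := by
    ext; simp [mulVec, dotProduct, mul_comm]
  have hcorner : (of fun _ _ => c : Matrix (Fin 1) (Fin 1) ℝ) *ᵥ (fun _ => t) = fun _ => c * t := by
    ext; simp [mulVec, dotProduct]
  rw [bordered, fromBlocks_mulVec, Sum.elim_comp_inl, Sum.elim_comp_inr,
    sumElim_dotProduct_sumElim, replicateRow_mulVec_eq_const, hcol, hcorner, dotProduct_add,
    dotProduct_smul, dotProduct_comm x b]
  simp only [dotProduct, Finset.univ_unique, Finset.sum_singleton, Pi.add_apply,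
    Function.const_apply, smul_eq_mul]
  ring

lemma toQuadraticForm'_apply [Fintype m] [DecidableEq m] (M : Matrix m m ℝ) (z : m → ℝ) :
    M.toQuadraticForm' z = z ⬝ᵥ M *ᵥ z := by
  simp [toQuadraticForm', toLinearMap₂'_apply']

lemma posSemidef_iff_forall_dotProduct_mulVec [Fintype m] {M : Matrix m m ℝ} (hM : M.IsSymm) :
    M.PosSemidef ↔ ∀ z, 0 ≤ z ⬝ᵥ M *ᵥ z := by
  simp [posSemidef_iff_dotProduct_mulVec, isHermitian_iff_isSymm, hM]

lemma continuous_toQuadraticForm' [Fintype m] [DecidableEq m] (M : Matrix m m ℝ) :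
    Continuous M.toQuadraticForm' := by
  simp only [funext (toQuadraticForm'_apply M)]
  exact continuous_id.dotProduct (continuous_const.matrix_mulVec continuous_id)

lemma eq_sumElim_one_of_apply_inr {z : m ⊕ Fin 1 → ℝ} (hz : z (Sum.inr 0) = 1) :
    z = Sum.elim (z ∘ Sum.inl) fun _ => 1 := by
  ext (i | i)
  · rfl
  · rw [Fin.fin_one_eq_zero i, hz, Sum.elim_inr]

theorem forall_le_iff_exists_posSemidef_bordered [Fintype m] [DecidableEq m]
    {A B : Matrix m m ℝ} (hA : A.IsSymm) (hB : B.IsSymm) (f g : m → ℝ) (μ s : ℝ)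
    (slater : ∃ x₀ : m → ℝ, x₀ ⬝ᵥ B *ᵥ x₀ - 2 * (g ⬝ᵥ x₀) < μ) :
    (∀ x : m → ℝ, x ⬝ᵥ B *ᵥ x - 2 * (g ⬝ᵥ x) ≤ μ → s ≤ x ⬝ᵥ A *ᵥ x - 2 * (f ⬝ᵥ x)) ↔
      ∃ σ : ℝ, 0 ≤ σ ∧ (bordered (A + σ • B) (-(f + σ • g)) (-μ * σ - s)).PosSemidef := by
  set P := (bordered A (-f) (-s)).toQuadraticForm'
  set Q := (bordered B (-g) (-μ)).toQuadraticForm'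
  have hP : ∀ x, P (Sum.elim x fun _ => 1) = x ⬝ᵥ A *ᵥ x - 2 * (f ⬝ᵥ x) - s := fun x => by
    rw [toQuadraticForm'_apply, sumElim_dotProduct_bordered_mulVec, neg_dotProduct]
    ring
  have hQ : ∀ x, Q (Sum.elim x fun _ => 1) = x ⬝ᵥ B *ᵥ x - 2 * (g ⬝ᵥ x) - μ := fun x => by
    rw [toQuadraticForm'_apply, sumElim_dotProduct_bordered_mulVec, neg_dotProduct]
    ring
  have hPQ : ∀ σ z, P z + σ * Q z
      = z ⬝ᵥ bordered (A + σ • B) (-(f + σ • g)) (-μ * σ - s) *ᵥ z := fun σ z => by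
    rw [show -(f + σ • g) = -f + σ • -g by module, show -μ * σ - s = -s + σ * -μ by ring,
      bordered_add_smul, add_mulVec, smul_mulVec, dotProduct_add, dotProduct_smul,
      toQuadraticForm'_apply, toQuadraticForm'_apply, smul_eq_mul]
  have hpsd (σ : ℝ) := posSemidef_iff_forall_dotProduct_mulVec
    (isSymm_bordered (hA.add (hB.smul σ)) (-(f + σ • g)) (-μ * σ - s))
  constructor
  · intro h
    obtain ⟨x₀, hx₀⟩ := slater
    have hQ_neg : ∃ z, Q z < 0 := ⟨Sum.elim x₀ fun _ => 1, by rw [hQ]; linarith⟩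
    have h_homog : ∀ z, Q z < 0 → 0 ≤ P z :=
      QuadraticMap.forall_neg_imp_nonneg_of_map_eq_one P Q (continuous_toQuadraticForm' _)
        (continuous_toQuadraticForm' _) (LinearMap.proj (Sum.inr 0)) (fun t => ⟨fun _ => t, rfl⟩)
        fun z hz hQz => by
          rw [eq_sumElim_one_of_apply_inr hz, hQ] at hQz
          rw [eq_sumElim_one_of_apply_inr hz, hP]
          linarith [h _ (by linarith)]
    obtain ⟨σ, hσ, hσPQ⟩ := QuadraticMap.s_lemma P Q hQ_neg h_homog
    exact ⟨σ, hσ, (hpsd σ).2 fun z => hPQ σ z ▸ hσPQ z⟩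
  · rintro ⟨σ, hσ, hσpsd⟩ x hx
    have := (hpsd σ).1 hσpsd (Sum.elim x fun _ => 1)
    rw [← hPQ, hP, hQ] at this
    nlinarith [mul_nonpos_of_nonneg_of_nonpos hσ (sub_nonpos.2 hx)]

end Matrix

lemma Real.sSup_lowerBounds_eq_sInf (s : Set ℝ) : sSup (lowerBounds s) = sInf s := by
  rcases s.eq_empty_or_nonempty with rfl | hne
  · rw [lowerBounds_empty, Real.sSup_univ, Real.sInf_empty]
  by_cases hb : BddBelow s
  · exact csSup_lowerBounds_eq_csInf hb hne
  · rw [Real.sInf_of_not_bddBelow hb, Set.not_nonempty_iff_eq_empty.mp hb, Real.sSup_empty]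

/-- under the primal Slater condition, for every `s ∈ ℝ`, `F(x) ≥ s` for
all feasible `x` iff there is `σ ≥ 0` making the block matrix
`[[A + σB, −f − σg], [−fᵀ − σgᵀ, −μσ − s]]` positive semidefinite; in particular the
optimal value of (QP1QC) equals the optimal value of its SDP dual. -/
theorem stmt_17 {n : ℕ} (A B : Matrix (Fin n) (Fin n) ℝ)
    (hA : A.IsSymm) (hB : B.IsSymm) (f g : Fin n → ℝ) (μ : ℝ)
    (slater : ∃ x₀ : Fin n → ℝ, x₀ ⬝ᵥ B *ᵥ x₀ - 2 * (g ⬝ᵥ x₀) < μ) :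
    (∀ s : ℝ,
      (∀ x : Fin n → ℝ, x ⬝ᵥ B *ᵥ x - 2 * (g ⬝ᵥ x) ≤ μ →
          s ≤ x ⬝ᵥ A *ᵥ x - 2 * (f ⬝ᵥ x)) ↔
        ∃ σ : ℝ, 0 ≤ σ ∧
          (Matrix.fromBlocks (A + σ • B)
            (Matrix.replicateCol (Fin 1) (-(f + σ • g)))
            (Matrix.replicateRow (Fin 1) (-(f + σ • g)))
            (Matrix.of fun _ _ => -μ * σ - s)).PosSemidef) ∧
    sInf ((fun x : Fin n → ℝ => x ⬝ᵥ A *ᵥ x - 2 * (f ⬝ᵥ x)) ''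
        {x : Fin n → ℝ | x ⬝ᵥ B *ᵥ x - 2 * (g ⬝ᵥ x) ≤ μ}) =
      sSup {s : ℝ | ∃ σ : ℝ, 0 ≤ σ ∧
        (Matrix.fromBlocks (A + σ • B)
          (Matrix.replicateCol (Fin 1) (-(f + σ • g)))
          (Matrix.replicateRow (Fin 1) (-(f + σ • g)))
          (Matrix.of fun _ _ => -μ * σ - s)).PosSemidef} := by
  have hdual (s : ℝ) := forall_le_iff_exists_posSemidef_bordered hA hB f g μ s slater
  refine ⟨hdual, ?_⟩
  rw [← Real.sSup_lowerBounds_eq_sInf]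
  congr 1
  ext s
  rw [mem_lowerBounds, Set.forall_mem_image]
  exact hdual s
end

section
/- Let B be a real symmetric n×n matrix, g ∈ ℝⁿ and μ ∈ ℝ, and let G(x) = xᵀBx − 2gᵀx. Then the primal Slater condition fails, i.e., there is no x ∈ ℝⁿ with G(x) < μ, if and only if B is positive semidefinite, there exists w ∈ ℝⁿ with Bw = g, and −gᵀw ≥ μ for such w. (Note that in this case μ ≤ 0, and the value gᵀw does not depend on the choice of w satisfying Bw = g.) -/
/-!
If `G ≥ μ` everywhere, restricting `G` to lines `t ↦ G (t • v)` gives a real quadratic bounded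
below, so `vᵀBv ≥ 0`, and for `v ∈ ker B` the linear term `-2 t gᵀv` must vanish; hence
`g ⊥ ker B = (range B)ᗮ`, i.e. `g = Bw`, and then `μ ≤ G w = -gᵀw`. Conversely, completing the
square gives `G x = (x - w)ᵀB(x - w) - gᵀw ≥ -gᵀw` when `B ≽ 0` and `Bw = g`.
-/

open Matrix

lemma nonneg_of_forall_le_mul_sq {μ a : ℝ} (h : ∀ t : ℝ, μ ≤ a * t ^ 2) : 0 ≤ a := by
  by_contra! ha
  have hs : 0 ≤ |μ| / -a := div_nonneg (abs_nonneg μ) (neg_nonneg.2 ha.le)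
  have has : a * (|μ| / -a) = -|μ| := by rw [div_neg, mul_neg, mul_div_cancel₀ _ ha.ne]
  generalize |μ| / -a = s at hs has
  have has2 : a * s ^ 2 ≤ 0 := mul_nonpos_of_nonpos_of_nonneg ha.le (sq_nonneg s)
  linarith [h (1 + s), neg_abs_le μ, abs_nonneg μ]

lemma eq_zero_of_forall_le_mul {μ b : ℝ} (h : ∀ t : ℝ, μ ≤ b * t) : b = 0 := by
  by_contra hb
  have := h ((μ - 1) / b)
  rw [mul_div_cancel₀ _ hb] at this
  linarith

namespace Matrix

variable {ι : Type*} [Fintype ι] {B : Matrix ι ι ℝ}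

lemma IsSymm.exists_mulVec_eq_of_forall_dotProduct_eq_zero [DecidableEq ι] (hB : B.IsSymm)
    {g : ι → ℝ} (hg : ∀ v, B *ᵥ v = 0 → g ⬝ᵥ v = 0) : ∃ w, B *ᵥ w = g := by
  have hT : (toEuclideanLin B).IsSymmetric :=
    isSymmetric_toEuclideanLin_iff.2 (isHermitian_iff_isSymm.2 hB)
  have hg' : WithLp.toLp 2 g ∈ LinearMap.range (toEuclideanLin B) := by
    rw [← Submodule.orthogonal_orthogonal (LinearMap.range _), hT.orthogonal_range]
    intro v hv
    rw [EuclideanSpace.inner_eq_star_dotProduct, star_trivial]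
    exact hg _ (by simpa using congrArg WithLp.ofLp (LinearMap.mem_ker.1 hv))
  obtain ⟨w, hw⟩ := hg'
  exact ⟨w.ofLp, by simpa using congrArg WithLp.ofLp hw⟩

def quadObjective (B : Matrix ι ι ℝ) (g x : ι → ℝ) : ℝ := x ⬝ᵥ B *ᵥ x - 2 * (g ⬝ᵥ x)

variable {g : ι → ℝ}

lemma quadObjective_smul (t : ℝ) (x : ι → ℝ) :
    quadObjective B g (t • x) = (x ⬝ᵥ B *ᵥ x) * t ^ 2 - 2 * (g ⬝ᵥ x) * t := by
  simp only [quadObjective, mulVec_smul, dotProduct_smul, smul_dotProduct, smul_eq_mul]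
  ring

lemma IsSymm.quadObjective_eq_of_mulVec_eq (hB : B.IsSymm) {w : ι → ℝ} (hw : B *ᵥ w = g)
    (x : ι → ℝ) : quadObjective B g x = (x - w) ⬝ᵥ B *ᵥ (x - w) - g ⬝ᵥ w := by
  have hxw : x ⬝ᵥ B *ᵥ w = g ⬝ᵥ x := by rw [hw, dotProduct_comm]
  have hwx : w ⬝ᵥ B *ᵥ x = g ⬝ᵥ x := by
    rw [dotProduct_mulVec, ← mulVec_transpose, hB, dotProduct_comm, hxw]
  have hww : w ⬝ᵥ B *ᵥ w = g ⬝ᵥ w := by rw [hw, dotProduct_comm]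
  simp only [quadObjective, mulVec_sub, sub_dotProduct, dotProduct_sub, hxw, hwx, hww]
  ring

lemma PosSemidef.neg_dotProduct_le_quadObjective (hB : B.PosSemidef) {w : ι → ℝ}
    (hw : B *ᵥ w = g) (x : ι → ℝ) : -(g ⬝ᵥ w) ≤ quadObjective B g x := by
  have hsq := hB.dotProduct_mulVec_nonneg (x - w)
  rw [star_trivial] at hsq
  rw [(isHermitian_iff_isSymm.1 hB.isHermitian).quadObjective_eq_of_mulVec_eq hw x]
  linarith

variable {μ : ℝ}

lemma posSemidef_of_forall_le_quadObjective (hB : B.IsSymm)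
    (hG : ∀ x, μ ≤ quadObjective B g x) : B.PosSemidef := by
  refine .of_dotProduct_mulVec_nonneg (isHermitian_iff_isSymm.2 hB) fun x => ?_
  refine nonneg_of_forall_le_mul_sq (μ := μ) fun t => ?_
  have hpos := hG (t • x)
  have hneg := hG ((-t) • x)
  rw [quadObjective_smul] at hpos hneg
  rw [star_trivial]
  linarith

lemma dotProduct_eq_zero_of_forall_le_quadObjective (hG : ∀ x, μ ≤ quadObjective B g x)
    {v : ι → ℝ} (hv : B *ᵥ v = 0) : g ⬝ᵥ v = 0 := by
  have := eq_zero_of_forall_le_mul (μ := μ) (b := -2 * (g ⬝ᵥ v)) fun t => by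
    simpa [quadObjective_smul, hv] using hG (t • v)
  linarith

end Matrix

/-- the primal Slater condition for `G(x) = xᵀBx − 2gᵀx ≤ μ` fails iff
`B ≽ 0`, `g ∈ R(B)` (say `Bw = g`), and `−gᵀw ≥ μ`. -/
theorem stmt_18 {n : ℕ} (B : Matrix (Fin n) (Fin n) ℝ)
    (hB : B.IsSymm) (g : Fin n → ℝ) (μ : ℝ) :
    (¬ ∃ x : Fin n → ℝ, x ⬝ᵥ B *ᵥ x - 2 * (g ⬝ᵥ x) < μ) ↔
      (B.PosSemidef ∧ ∃ w : Fin n → ℝ, B *ᵥ w = g ∧ μ ≤ -(g ⬝ᵥ w)) := by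
  constructor
  · intro h
    have hG : ∀ x, μ ≤ quadObjective B g x := fun x => not_lt.1 fun hx => h ⟨x, hx⟩
    obtain ⟨w, hw⟩ := hB.exists_mulVec_eq_of_forall_dotProduct_eq_zero
      fun v => dotProduct_eq_zero_of_forall_le_quadObjective hG
    refine ⟨posSemidef_of_forall_le_quadObjective hB hG, w, hw, ?_⟩
    simpa [hB.quadObjective_eq_of_mulVec_eq hw w] using hG w
  · rintro ⟨hB₀, w, hw, hμ⟩ ⟨x, hx⟩
    exact (hμ.trans (hB₀.neg_dotProduct_le_quadObjective hw x)).not_gt hx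
end
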